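/- arXiv:2407.16239 — 3 statements merged into one kernel-verified Lean document; each statement's English description precedes it below -/
import Mathlib

section
/- Let g : ℝⁿ → ℝⁿ be a C¹ diffeomorphism with inverse f = g⁻¹, let σ > 0, and let μ₁, …, μ_Q ∈ ℝⁿ be such that the differences {μ_ξ − μ₁ : ξ = 2, …, Q} span ℝⁿ. For each ξ let p_ξ be the Lebesgue density of the pushforward under g of the Gaussian measure N(μ_ξ, σ²Iₙ). Suppose there exist a function h : ℝⁿ → ℝⁿ, vectors w_ξ ∈ ℝⁿ and scalars b_ξ, c_ξ (ξ = 2, …, Q) such that for all x ∈ ℝⁿ and all ξ: w_ξᵀ h(x) + b_ξ = log p_ξ(x) − log p₁(x) + c_ξ. Then there exist an invertible matrix A ∈ ℝⁿˣⁿ and a vector d ∈ ℝⁿ such that A h(x) + d = f(x) = g⁻¹(x) for all x ∈ ℝⁿ; that is, the feature extractor h recovers the true latents up to an invertible affine transformation. -/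
/-!
The normalising constant and the Jacobian factor `|det Df(x)|` (nonzero, as `f` has a
differentiable inverse) are common to all classes, so they cancel in `log p_ξ - log p₁`,
which is therefore affine in `f(x)`: it equals
`((μ_ξ - μ₁) ⬝ᵥ f(x) - (μ_ξ ⬝ᵥ μ_ξ - μ₁ ⬝ᵥ μ₁) / 2) / σ²`.
The logit identities thus make each functional `(μ_ξ - μ₁) ⬝ᵥ f(x)` an affine function of
`h(x)`. Since these functionals span the dual, the matrix with rows `μ_ξ - μ₁` has a left
inverse, which writes `f(x)` as an affine function of `h(x)`; its linear part is invertible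
because `f` is surjective.
-/

open Real Function Matrix

theorem det_fderiv_ne_zero_of_leftInverse {𝕜 E : Type*} [NontriviallyNormedField 𝕜]
    [NormedAddCommGroup E] [NormedSpace 𝕜 E] [FiniteDimensional 𝕜 E] {f g : E → E}
    (hfg : LeftInverse f g) {x y : E} (hgy : g y = x)
    (hf : DifferentiableAt 𝕜 f x) (hg : DifferentiableAt 𝕜 g y) :
    (fderiv 𝕜 f x).det ≠ 0 := by
  subst hgy
  have hchain : (fderiv 𝕜 f (g y)).comp (fderiv 𝕜 g y) = .id 𝕜 E := by
    rw [← fderiv_comp y hf hg, hfg.comp_eq_id, fderiv_id]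
  have hdet : (fderiv 𝕜 f (g y)).det * (fderiv 𝕜 g y).det = 1 := by
    simpa [ContinuousLinearMap.det, LinearMap.det_comp] using
      congrArg ContinuousLinearMap.det hchain
  exact left_ne_zero_of_mul_eq_one hdet

theorem Real.log_mul_exp_mul_sub_log_mul_exp_mul {a t : ℝ} (ha : a ≠ 0) (ht : t ≠ 0) (u v : ℝ) :
    log (a * exp u * t) - log (a * exp v * t) = u - v := by
  simp only [log_mul (mul_ne_zero ha (exp_ne_zero _)) ht, log_mul ha (exp_ne_zero _), log_exp]
  ring

theorem log_gaussian_density_sub {ι : Type*} [Fintype ι] {C σ D : ℝ} (hC : C ≠ 0) (hσ : σ ≠ 0)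
    (hD : D ≠ 0) (y m m' : ι → ℝ) :
    log (C * exp (-(∑ i, (y i - m i) ^ 2) / (2 * σ ^ 2)) * |D|) -
        log (C * exp (-(∑ i, (y i - m' i) ^ 2) / (2 * σ ^ 2)) * |D|) =
      ((m - m') ⬝ᵥ y - (m ⬝ᵥ m - m' ⬝ᵥ m') / 2) / σ ^ 2 := by
  rw [log_mul_exp_mul_sub_log_mul_exp_mul hC (abs_ne_zero.mpr hD)]
  have hsq : ∑ i, (y i - m' i) ^ 2 - ∑ i, (y i - m i) ^ 2 =
      2 * ((m - m') ⬝ᵥ y) - (m ⬝ᵥ m - m' ⬝ᵥ m') := by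
    simp only [dotProduct, ← Finset.sum_sub_distrib, Finset.mul_sum, Pi.sub_apply]
    exact Finset.sum_congr rfl fun i _ => by ring
  field_simp
  linear_combination hsq

theorem Matrix.mulVec_injective_of_span_rows_eq_top {ι m K : Type*} [Fintype m] [Field K]
    [LinearOrder K] [IsStrictOrderedRing K] {V : Matrix ι m K}
    (hV : Submodule.span K (Set.range V) = ⊤) : Injective V.mulVec := by
  rw [← coe_mulVecLin, ← LinearMap.ker_eq_bot, LinearMap.ker_eq_bot']
  intro y hy
  have horth : (dotProductBilin K K).flip y = 0 :=
    LinearMap.ext_on_range hV fun i => congrFun hy i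
  exact dotProduct_self_eq_zero.mp (LinearMap.congr_fun horth y)

theorem exists_affine_eq_of_span_eq_top {ι X K n m : Type*} [Fintype n] [Fintype m]
    [DecidableEq m] [Field K] [LinearOrder K] [IsStrictOrderedRing K]
    {v : ι → n → K} (hv : Submodule.span K (Set.range v) = ⊤) {a : ι → m → K} {k : ι → K}
    {F : X → n → K} {H : X → m → K} (hFH : ∀ i x, v i ⬝ᵥ F x = a i ⬝ᵥ H x + k i) :
    ∃ (A : Matrix n m K) (d : n → K), ∀ x, A *ᵥ H x + d = F x := by
  set L := (of v).mulVecLin.leftInverse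
  have hL : ∀ y, L ((of v) *ᵥ y) = y :=
    LinearMap.leftInverse_apply_of_inj <| LinearMap.ker_eq_bot.mpr <|
      mulVec_injective_of_span_rows_eq_top hv
  refine ⟨LinearMap.toMatrix' (L ∘ₗ (of a).mulVecLin), L k, fun x => ?_⟩
  have hrows : (of v) *ᵥ F x = (of a) *ᵥ H x + k := funext fun i => hFH i x
  rw [LinearMap.toMatrix'_mulVec, LinearMap.comp_apply, mulVecLin_apply, ← map_add,
    ← hrows, hL]

theorem Matrix.isUnit_det_of_affine_eq_surjective {n X R : Type*} [Fintype n] [DecidableEq n]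
    [CommRing R] {A : Matrix n n R} {d : n → R} {F H : X → n → R}
    (hF : Surjective F) (hA : ∀ x, A *ᵥ H x + d = F x) : IsUnit A.det := by
  rw [← isUnit_iff_isUnit_det, ← mulVec_surjective_iff_isUnit]
  intro y
  obtain ⟨x, hx⟩ := hF (y + d)
  exact ⟨H x, add_right_cancel ((hA x).trans hx)⟩

/-- **Identifiability of the latent variable model (paper's Theorem 1).**
Let `g : ℝⁿ → ℝⁿ` be a C¹ diffeomorphism with C¹ inverse `f = g⁻¹`, `σ > 0`, and let
`μ₁, …, μ_Q` (class `1` is index `0` here) be such that the differences `{μ_ξ − μ₁ : ξ ≠ 1}`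
span `ℝⁿ`. Let `p_ξ(x) = (2πσ²)^{−n/2} exp(−‖f(x) − μ_ξ‖²/(2σ²)) |det Df(x)|` be the
Lebesgue density of the pushforward under `g` of `N(μ_ξ, σ²Iₙ)`. If a feature extractor
`h : ℝⁿ → ℝⁿ` satisfies, for some `w_ξ, b_ξ, c_ξ`,
`w_ξᵀh(x) + b_ξ = log p_ξ(x) − log p₁(x) + c_ξ` for all `x` and all `ξ ≠ 1`, then there are
an invertible matrix `A` and a vector `d` with `A h(x) + d = f(x) = g⁻¹(x)` for all `x`:
`h` recovers the true latents up to an invertible affine transformation. -/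
theorem latent_identifiability (n Q : ℕ) [NeZero Q] (σ : ℝ) (hσ : 0 < σ)
    (μ : Fin Q → Fin n → ℝ)
    (hspan : Submodule.span ℝ ((fun ξ : Fin Q => μ ξ - μ 0) '' {ξ | ξ ≠ 0}) = ⊤)
    (g f : (Fin n → ℝ) → (Fin n → ℝ))
    (hg : ContDiff ℝ 1 g) (hf : ContDiff ℝ 1 f)
    (hfg : ∀ x, f (g x) = x) (hgf : ∀ x, g (f x) = x)
    (p : Fin Q → (Fin n → ℝ) → ℝ)
    (hp : ∀ ξ x, p ξ x = (2 * π * σ ^ 2) ^ (-(n : ℝ) / 2) *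
      exp (-(∑ i, (f x i - μ ξ i) ^ 2) / (2 * σ ^ 2)) * |(fderiv ℝ f x).det|)
    (h : (Fin n → ℝ) → (Fin n → ℝ)) (w : Fin Q → Fin n → ℝ) (b c : Fin Q → ℝ)
    (hlogit : ∀ (ξ : Fin Q), ξ ≠ 0 → ∀ x : Fin n → ℝ,
      (∑ i, w ξ i * h x i) + b ξ = log (p ξ x) - log (p 0 x) + c ξ) :
    ∃ (A : Matrix (Fin n) (Fin n) ℝ) (d : Fin n → ℝ),
      IsUnit A.det ∧ ∀ x : Fin n → ℝ, A.mulVec (h x) + d = f x := by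
  have hdet : ∀ x, (fderiv ℝ f x).det ≠ 0 := fun x =>
    det_fderiv_ne_zero_of_leftInverse hfg (hgf x) (hf.differentiable one_ne_zero x)
      (hg.differentiable one_ne_zero _)
  have hC : (2 * π * σ ^ 2) ^ (-(n : ℝ) / 2) ≠ 0 := by positivity
  have hlin : ∀ (ξ : {ξ : Fin Q // ξ ≠ 0}) x, (μ ξ - μ 0) ⬝ᵥ f x =
      (σ ^ 2 • w ξ) ⬝ᵥ h x + (σ ^ 2 * (b ξ - c ξ) + (μ ξ ⬝ᵥ μ ξ - μ 0 ⬝ᵥ μ 0) / 2) := by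
    rintro ⟨ξ, hξ⟩ x
    have hratio : w ξ ⬝ᵥ h x + b ξ = _ := hlogit ξ hξ x
    rw [hp, hp, log_gaussian_density_sub hC hσ.ne' (hdet x)] at hratio
    rw [smul_dotProduct, smul_eq_mul]
    field_simp at hratio
    linear_combination (-1 / 2 : ℝ) * hratio
  rw [Set.image_eq_range] at hspan
  obtain ⟨A, d, hA⟩ := exists_affine_eq_of_span_eq_top hspan hlin
  exact ⟨A, d, isUnit_det_of_affine_eq_surjective (LeftInverse.surjective hfg) hA, hA⟩
end

section
/- Let f, h : ℝⁿ → ℝⁿ, let μ₁, …, μ_Q ∈ ℝⁿ, and suppose there exist vectors v₂, …, v_Q ∈ ℝⁿ and scalars γ₂, …, γ_Q such that for all x ∈ ℝⁿ and all ξ ∈ {2, …, Q}: ⟨μ_ξ − μ₁, f(x)⟩ = ⟨v_ξ, h(x)⟩ + γ_ξ. If the vectors {μ_ξ − μ₁ : ξ = 2, …, Q} span ℝⁿ and f is surjective onto ℝⁿ, then there exist an invertible matrix A ∈ ℝⁿˣⁿ and a vector d ∈ ℝⁿ such that f(x) = A h(x) + d for all x ∈ ℝⁿ. -/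
/-!
The vectors `w` for which `x ↦ ⟨w, f x⟩` is an affine function of `h x` form a subspace. It
contains the mean differences, which span, so it contains every coordinate vector: each
coordinate of `f` is affine in `h`, i.e. `f = A h + d`. Surjectivity of `f` then forces
`A` to be surjective, hence invertible.
-/

open Matrix

section AffineReadouts

variable {α R ι κ : Type*} [CommRing R] [Fintype ι] [Fintype κ]

def affineReadouts (f : α → ι → R) (h : α → κ → R) : Submodule R (ι → R) where
  carrier := {w | ∃ (u : κ → R) (c : R), ∀ x, w ⬝ᵥ f x = u ⬝ᵥ h x + c}
  zero_mem' := ⟨0, 0, fun x => by simp⟩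
  add_mem' := by
    rintro w w' ⟨u, c, hu⟩ ⟨u', c', hu'⟩
    exact ⟨u + u', c + c', fun x => by
      simp only [add_dotProduct, hu, hu']
      ring⟩
  smul_mem' := by
    rintro a w ⟨u, c, hu⟩
    exact ⟨a • u, a * c, fun x => by
      simp only [smul_dotProduct, hu, smul_eq_mul]
      ring⟩

theorem exists_mulVec_add_of_affineReadouts_eq_top [DecidableEq ι]
    {f : α → ι → R} {h : α → κ → R} (htop : affineReadouts f h = ⊤) :
    ∃ (A : Matrix ι κ R) (d : ι → R), ∀ x, f x = A *ᵥ h x + d := by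
  have hcoord (j : ι) : Pi.single j 1 ∈ affineReadouts f h := htop ▸ Submodule.mem_top
  choose u c hu using hcoord
  refine ⟨Matrix.of u, c, fun x => funext fun j => ?_⟩
  rw [Pi.add_apply, mulVec, ← single_one_dotProduct j (f x), hu j x]
  rfl

theorem affineReadouts_eq_top_of_span_eq_top {f : α → ι → R} {h : α → κ → R}
    {S : Set (ι → R)} (hspan : Submodule.span R S = ⊤) (hS : S ⊆ affineReadouts f h) :
    affineReadouts f h = ⊤ :=
  top_le_iff.mp (hspan ▸ Submodule.span_le.mpr hS)

end AffineReadouts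

theorem isUnit_det_of_surjective_mulVec_add {α R ι : Type*} [CommRing R] [Fintype ι]
    [DecidableEq ι] {f h : α → ι → R} {A : Matrix ι ι R} {d : ι → R}
    (hf : ∀ x, f x = A *ᵥ h x + d) (hsurj : Function.Surjective f) : IsUnit A.det := by
  have hA : Function.Surjective A.mulVec := fun y => by
    obtain ⟨x, hx⟩ := hsurj (y + d)
    exact ⟨h x, add_right_cancel (hf x ▸ hx)⟩
  exact (isUnit_iff_isUnit_det A).mp (mulVec_surjective_iff_isUnit.mp hA)

/-- **Linear-algebraic core of the identifiability theorem.**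
Suppose two feature maps `f, h : ℝⁿ → ℝⁿ` satisfy, for every class `ξ ≠ 1`, an affine relation
`⟨μ_ξ − μ₁, f(x)⟩ = ⟨v_ξ, h(x)⟩ + γ_ξ` for all `x`. If the mean differences `{μ_ξ − μ₁}`
span `ℝⁿ` and `f` is surjective, then `f(x) = A h(x) + d` for some invertible matrix `A`
and vector `d`. (Class `1` of the paper is index `0` here.) -/
theorem affine_relations_give_affine_identifiability (n Q : ℕ) [NeZero Q]
    (f h : (Fin n → ℝ) → (Fin n → ℝ))
    (μ : Fin Q → Fin n → ℝ) (v : Fin Q → Fin n → ℝ) (γ : Fin Q → ℝ)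
    (hrel : ∀ (ξ : Fin Q), ξ ≠ 0 → ∀ x : Fin n → ℝ,
      ∑ i, (μ ξ i - μ 0 i) * f x i = (∑ i, v ξ i * h x i) + γ ξ)
    (hspan : Submodule.span ℝ ((fun ξ : Fin Q => μ ξ - μ 0) '' {ξ | ξ ≠ 0}) = ⊤)
    (hsurj : Function.Surjective f) :
    ∃ (A : Matrix (Fin n) (Fin n) ℝ) (d : Fin n → ℝ),
      IsUnit A.det ∧ ∀ x : Fin n → ℝ, f x = A.mulVec (h x) + d := by
  have hdiffs : (fun ξ : Fin Q => μ ξ - μ 0) '' {ξ | ξ ≠ 0} ⊆ affineReadouts f h := by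
    rintro _ ⟨ξ, hξ, rfl⟩
    exact ⟨v ξ, γ ξ, hrel ξ hξ⟩
  obtain ⟨A, d, hfA⟩ := exists_mulVec_add_of_affineReadouts_eq_top
    (affineReadouts_eq_top_of_span_eq_top hspan hdiffs)
  exact ⟨A, d, isUnit_det_of_surjective_mulVec_add hfA hsurj, hfA⟩
end

section
/- Fix σ > 0, n ≥ 1, K ≥ 2. Let (Ω, P) be a probability space and η₁, η₂, … : Ω → ℝⁿ be i.i.d. random vectors whose n coordinates are independent N(0, σ²) Gaussians. Let z ∈ ℝⁿ and let θ₁, …, θ_K ∈ ℝⁿ be arm parameters with ‖θ_a‖₂ = 1 for all a. Let a* ∈ {1, …, K} and Δ > 0 satisfy (θ_{a*} − θ_a)ᵀz > Δ for all a ≠ a*. For t ≥ 1 define ẑ_t = z + (1/t)Σ_{s=1}^t η_s, let a_t ∈ argmax_{a} θ_aᵀ ẑ_t be the Greedy1 action (measurably chosen), let R_T = Σ_{t=1}^T (θ_{a*} − θ_{a_t})ᵀz be the cumulative regret, and let Δ̄ = max_{a ≠ a*} (θ_{a*} − θ_a)ᵀz. Then for every T, the expected regret satisfies E[R_T] ≤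 2K Δ̄ (exp(Δ²/(8σ²)) − 1)⁻¹; in particular the expected regret of Greedy1 is bounded by a constant independent of T. -/
/-!
If Greedy1 plays some `b ≠ a*` at round `t`, the averaged noise must overcome the gap:
`⟨θ_b - θ_{a*}, ∑_{s ≤ t} η_s⟩ ≥ tΔ`. The left side is sub-Gaussian with variance proxy
`t σ² ‖θ_b - θ_{a*}‖² ≤ 4tσ²`, so this has probability at most `exp (-t Δ² / (8σ²))`.
A union bound over the arms, the bound `Δ̄` on the regret of any wrong arm, and summing the
geometric series over `t` give `E[R_T] ≤ K Δ̄ / (exp (Δ² / (8σ²)) - 1)`.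
-/

open MeasureTheory ProbabilityTheory Real Finset
open scoped NNReal

namespace ProbabilityTheory

variable {Ω : Type*} {mΩ : MeasurableSpace Ω} {μ : Measure Ω}

lemma HasSubgaussianMGF.mono {X : Ω → ℝ} {c c' : ℝ≥0} (h : HasSubgaussianMGF X c μ)
    (hc : c ≤ c') : HasSubgaussianMGF X c' μ where
  integrable_exp_mul := h.integrable_exp_mul
  mgf_le t := (h.mgf_le t).trans <| exp_le_exp.mpr <| by gcongr

lemma hasSubgaussianMGF_of_map_eq_gaussianReal {X : Ω → ℝ} {v : ℝ≥0}
    (hX : μ.map X = gaussianReal 0 v) : HasSubgaussianMGF X v μ := by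
  have hXm : AEMeasurable X μ := aemeasurable_of_map_neZero (by rw [hX]; infer_instance)
  rw [← HasSubgaussianMGF.id_map_iff hXm, hX]
  exact ⟨integrable_exp_mul_gaussianReal, fun t => by simp [mgf_id_gaussianReal]⟩

lemma measureReal_sum_mul_ge_le {ι : Type*} {ξ : ι → Ω → ℝ} (hindep : iIndepFun ξ μ) {v : ℝ≥0}
    (s : Finset ι) (hξ : ∀ p ∈ s, μ.map (ξ p) = gaussianReal 0 v) (w : ι → ℝ) {c : ℝ}
    (hc : v * ∑ p ∈ s, w p ^ 2 ≤ c) {ε : ℝ} (hε : 0 ≤ ε) :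
    μ.real {ω | ε ≤ ∑ p ∈ s, w p * ξ p ω} ≤ exp (-ε ^ 2 / (2 * c)) := by
  have hsum := HasSubgaussianMGF.sum_of_iIndepFun
    (hindep.comp (fun p x => w p * x) fun p => measurable_const_mul (w p)) (s := s)
    fun p hp => (hasSubgaussianMGF_of_map_eq_gaussianReal (hξ p hp)).const_mul (w p)
  have hc0 : 0 ≤ c := le_trans (by positivity) hc
  have hvar : ∑ p ∈ s, ⟨w p ^ 2, sq_nonneg (w p)⟩ * v ≤ (⟨c, hc0⟩ : ℝ≥0) := by
    refine NNReal.coe_le_coe.mp (le_of_eq_of_le ?_ hc)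
    rw [NNReal.coe_sum, mul_sum]
    exact sum_congr rfl fun p _ => mul_comm _ _
  exact (hsum.mono hvar).measure_ge_le hε

end ProbabilityTheory

lemma sum_sub_sq_le_four {ι : Type*} [Fintype ι] {x y : ι → ℝ} (hx : ∑ i, x i ^ 2 = 1)
    (hy : ∑ i, y i ^ 2 = 1) : ∑ i, (x i - y i) ^ 2 ≤ 4 :=
  calc ∑ i, (x i - y i) ^ 2 ≤ ∑ i, ((x i - y i) ^ 2 + (x i + y i) ^ 2) :=
        sum_le_sum fun i _ => le_add_of_nonneg_right (sq_nonneg _)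
    _ = 2 * ∑ i, x i ^ 2 + 2 * ∑ i, y i ^ 2 := by
        rw [mul_sum, mul_sum, ← sum_add_distrib]
        exact sum_congr rfl fun i _ => by ring
    _ = 4 := by rw [hx, hy]; norm_num

lemma mul_lt_sum_sub_mul_of_sum_mul_le {ι : Type*} [Fintype ι] {t Δ : ℝ} (ht : 0 < t)
    {u v z ξ : ι → ℝ} (hle : ∑ i, u i * (z i + t⁻¹ * ξ i) ≤ ∑ i, v i * (z i + t⁻¹ * ξ i))
    (hlt : Δ < ∑ i, (u i - v i) * z i) : t * Δ < ∑ i, (v i - u i) * ξ i := by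
  have hsplit : ∑ i, v i * (z i + t⁻¹ * ξ i) - ∑ i, u i * (z i + t⁻¹ * ξ i)
      = t⁻¹ * ∑ i, (v i - u i) * ξ i - ∑ i, (u i - v i) * z i := by
    rw [mul_sum, ← sum_sub_distrib, ← sum_sub_distrib]
    exact sum_congr rfl fun i _ => by ring
  exact (lt_inv_mul_iff₀ ht).mp (by linarith)

lemma sum_Icc_exp_neg_mul_le {c : ℝ} (hc : 0 < c) (T : ℕ) :
    ∑ t ∈ Icc 1 T, exp (-(t * c)) ≤ (exp c - 1)⁻¹ := by
  have hr : exp (-c) < 1 := exp_lt_one_iff.mpr (neg_lt_zero.mpr hc)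
  have hc1 : 1 < exp c := one_lt_exp_iff.mpr hc
  calc ∑ t ∈ Icc 1 T, exp (-(t * c)) = ∑ t ∈ Ico 1 (T + 1), exp (-c) ^ t := by
        rw [← Ico_add_one_right_eq_Icc]
        exact sum_congr rfl fun t _ => by rw [← exp_nat_mul]; ring_nf
    _ ≤ exp (-c) ^ 1 / (1 - exp (-c)) := geom_sum_Ico_le_of_lt_one (exp_pos _).le hr
    _ = (exp c - 1)⁻¹ := by
        rw [pow_one, exp_neg]
        field_simp [(exp_pos c).ne', (sub_pos.mpr hc1).ne']

section Finite

variable {Ω α : Type*} [MeasurableSpace Ω] {μ : Measure Ω} [IsFiniteMeasure μ]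
  [MeasurableSpace α] [MeasurableSingletonClass α] [Finite α] {X : Ω → α}

lemma integrable_comp_of_finite (hX : Measurable X) (g : α → ℝ) :
    Integrable (fun ω => g (X ω)) μ :=
  Integrable.of_finite.comp_measurable hX

lemma integral_comp_le_mul_measureReal_ne (hX : Measurable X) {g : α → ℝ} {a₀ : α} {M : ℝ}
    (h₀ : g a₀ = 0) (hM : ∀ b, b ≠ a₀ → g b ≤ M) :
    ∫ ω, g (X ω) ∂μ ≤ M * μ.real {ω | X ω ≠ a₀} := by
  have hE : MeasurableSet {ω | X ω ≠ a₀} := hX (measurableSet_singleton a₀).compl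
  calc ∫ ω, g (X ω) ∂μ ≤ ∫ ω, {ω | X ω ≠ a₀}.indicator (fun _ => M) ω ∂μ := by
        refine integral_mono (integrable_comp_of_finite hX g)
          ((integrable_const M).indicator hE) fun ω => ?_
        by_cases h : X ω = a₀
        · simp [h, h₀]
        · simpa [h] using hM _ h
    _ = M * μ.real {ω | X ω ≠ a₀} := by
        rw [integral_indicator_const M hE, smul_eq_mul, mul_comm]

end Finite

lemma measureReal_greedy_ne_le {n K : ℕ} {σ Δ : ℝ} (hσ : 0 < σ) (hΔ : 0 < Δ) {Ω : Type*}
    [MeasurableSpace Ω] {P : Measure Ω} [IsProbabilityMeasure P] {η : ℕ → Ω → Fin n → ℝ}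
    (hindep : iIndepFun (fun (p : ℕ × Fin n) ω => η p.1 ω p.2) P)
    (hgauss : ∀ s i, P.map (fun ω => η s ω i) = gaussianReal 0 ⟨σ ^ 2, sq_nonneg σ⟩)
    {z : Fin n → ℝ} {θ : Fin K → Fin n → ℝ} (hθ : ∀ b, ∑ i, θ b i ^ 2 = 1) {astar : Fin K}
    (hgap : ∀ b, b ≠ astar → Δ < ∑ i, (θ astar i - θ b i) * z i) {t : ℕ} (ht : 1 ≤ t)
    {A : Ω → Fin K} (hgreedy : ∀ ω b,
      ∑ i, θ b i * (z i + (t : ℝ)⁻¹ * ∑ s ∈ Icc 1 t, η s ω i)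
        ≤ ∑ i, θ (A ω) i * (z i + (t : ℝ)⁻¹ * ∑ s ∈ Icc 1 t, η s ω i)) :
    P.real {ω | A ω ≠ astar} ≤ K * exp (-(t * (Δ ^ 2 / (8 * σ ^ 2)))) := by
  have ht' : (0 : ℝ) < t := Nat.cast_pos.mpr ht
  set S := Icc 1 t ×ˢ (univ : Finset (Fin n))
  set E : Fin K → Set Ω := fun b =>
    {ω | t * Δ ≤ ∑ p ∈ S, (θ b p.2 - θ astar p.2) * η p.1 ω p.2}
  have hsub : {ω | A ω ≠ astar} ⊆ ⋃ b, E b := fun ω hω => by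
    refine Set.mem_iUnion.mpr ⟨A ω, ?_⟩
    have := mul_lt_sum_sub_mul_of_sum_mul_le ht' (hgreedy ω astar) (hgap _ hω)
    simp only [E, S, Set.mem_ofPred_eq, sum_product]
    rw [sum_comm]
    simpa only [mul_sum] using this.le
  have htail : ∀ b, P.real (E b) ≤ exp (-(t * (Δ ^ 2 / (8 * σ ^ 2)))) := fun b => by
    refine (measureReal_sum_mul_ge_le hindep S (fun p _ => hgauss p.1 p.2) _
      (c := 4 * t * σ ^ 2) ?_ (by positivity)).trans_eq ?_
    · simp only [S, sum_product, sum_const, Nat.card_Icc, add_tsub_cancel_right, nsmul_eq_mul]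
      change σ ^ 2 * (t * ∑ i, (θ b i - θ astar i) ^ 2) ≤ 4 * t * σ ^ 2
      nlinarith [mul_le_mul_of_nonneg_left (sum_sub_sq_le_four (hθ b) (hθ astar))
        (by positivity : 0 ≤ σ ^ 2 * t)]
    · congr 1
      field_simp
      ring
  calc P.real {ω | A ω ≠ astar} ≤ P.real (⋃ b, E b) := measureReal_mono hsub
    _ ≤ ∑ b, P.real (E b) := measureReal_iUnion_fintype_le E
    _ ≤ ∑ _b : Fin K, exp (-(t * (Δ ^ 2 / (8 * σ ^ 2)))) := sum_le_sum fun b _ => htail b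
    _ = K * exp (-(t * (Δ ^ 2 / (8 * σ ^ 2)))) := by simp

theorem greedy1_constant_regret_general (n K : ℕ)
    (σ Δ : ℝ) (hσ : 0 < σ) (hΔ : 0 < Δ)
    (Ω : Type*) [MeasurableSpace Ω] (P : Measure Ω) [IsProbabilityMeasure P]
    (η : ℕ → Ω → (Fin n → ℝ))
    (hindep : iIndepFun (fun (p : ℕ × Fin n) ω => η p.1 ω p.2) P)
    (hgauss : ∀ (s : ℕ) (i : Fin n),
      Measure.map (fun ω => η s ω i) P = gaussianReal 0 ⟨σ ^ 2, sq_nonneg σ⟩)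
    (z : Fin n → ℝ) (θ : Fin K → Fin n → ℝ) (hθ : ∀ a, ∑ i, θ a i ^ 2 = 1)
    (astar : Fin K)
    (hgap : ∀ a : Fin K, a ≠ astar → Δ < ∑ i, (θ astar i - θ a i) * z i)
    (zhat : ℕ → Ω → (Fin n → ℝ))
    (hzhat : ∀ t ω, zhat t ω = fun i => z i + (t : ℝ)⁻¹ * ∑ s ∈ Icc 1 t, η s ω i)
    (a : ℕ → Ω → Fin K) (hameas : ∀ t, Measurable (a t))
    (hgreedy : ∀ t, 1 ≤ t → ∀ ω, ∀ b : Fin K,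
      ∑ i, θ b i * zhat t ω i ≤ ∑ i, θ (a t ω) i * zhat t ω i)
    (Δbar : ℝ)
    (hΔbar_ub : ∀ b : Fin K, b ≠ astar → ∑ i, (θ astar i - θ b i) * z i ≤ Δbar)
    (hΔbar_mem : ∃ b : Fin K, b ≠ astar ∧ ∑ i, (θ astar i - θ b i) * z i = Δbar) :
    ∀ T : ℕ,
      (∫ ω, ∑ t ∈ Icc 1 T, ∑ i, (θ astar i - θ (a t ω) i) * z i ∂P) ≤
        2 * K * Δbar * (exp (Δ ^ 2 / (8 * σ ^ 2)) - 1)⁻¹ := by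
  intro T
  set c := Δ ^ 2 / (8 * σ ^ 2)
  have hΔbar : 0 ≤ Δbar := by
    obtain ⟨b, hb, rfl⟩ := hΔbar_mem
    linarith [hgap b hb]
  have hround : ∀ t ∈ Icc 1 T, ∫ ω, ∑ i, (θ astar i - θ (a t ω) i) * z i ∂P
      ≤ Δbar * (K * exp (-(t * c))) := fun t ht => by
    have ht1 : 1 ≤ t := (mem_Icc.mp ht).1
    calc _ ≤ Δbar * P.real {ω | a t ω ≠ astar} :=
          integral_comp_le_mul_measureReal_ne (hameas t) (by simp) hΔbar_ub
      _ ≤ _ := by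
          gcongr
          exact measureReal_greedy_ne_le hσ hΔ hindep hgauss hθ hgap ht1
            fun ω b => by simpa only [hzhat] using hgreedy t ht1 ω b
  have hinv : 0 ≤ (exp c - 1)⁻¹ := inv_nonneg.mpr (sub_nonneg.mpr (one_le_exp (by positivity)))
  rw [integral_finsetSum (Icc 1 T) fun t _ =>
    integrable_comp_of_finite (g := fun b => ∑ i, (θ astar i - θ b i) * z i) (hameas t)]
  calc _ ≤ ∑ t ∈ Icc 1 T, Δbar * (K * exp (-(t * c))) := sum_le_sum hround
    _ = Δbar * K * ∑ t ∈ Icc 1 T, exp (-(t * c)) := by simp only [mul_sum, mul_assoc]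
    _ ≤ Δbar * K * (exp c - 1)⁻¹ := by gcongr; exact sum_Icc_exp_neg_mul_le (by positivity) T
    _ ≤ 2 * K * Δbar * (exp c - 1)⁻¹ := by
        nlinarith [mul_nonneg (mul_nonneg hΔbar (Nat.cast_nonneg K)) hinv]

/-- **Constant expected regret of Greedy1 under a well-specified latent model.**
At each round `t ≥ 1` the algorithm observes `z + η_t` with `η_t` i.i.d. Gaussian
(`n` independent `N(0,σ²)` coordinates), forms the average `ẑ_t = z + (1/t)Σ_{s=1}^t η_s`,
and plays `a_t ∈ argmax_a θ_aᵀ ẑ_t`. If `(θ_{a*} − θ_a)ᵀz > Δ > 0` for all `a ≠ a*` and all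
arms are unit vectors, then for every horizon `T` the expected cumulative regret satisfies
`E[R_T] ≤ 2 K Δ̄ (exp(Δ²/(8σ²)) − 1)⁻¹`, where `Δ̄ = max_{a ≠ a*} (θ_{a*} − θ_a)ᵀz`. -/
theorem greedy1_constant_regret (n K : ℕ) (hn : 1 ≤ n) (hK : 2 ≤ K)
    (σ Δ : ℝ) (hσ : 0 < σ) (hΔ : 0 < Δ)
    (Ω : Type*) [MeasurableSpace Ω] (P : Measure Ω) [IsProbabilityMeasure P]
    (η : ℕ → Ω → (Fin n → ℝ)) (hmeas : ∀ s, Measurable (η s))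
    (hindep : iIndepFun (fun (p : ℕ × Fin n) ω => η p.1 ω p.2) P)
    (hgauss : ∀ (s : ℕ) (i : Fin n),
      Measure.map (fun ω => η s ω i) P = gaussianReal 0 ⟨σ ^ 2, sq_nonneg σ⟩)
    (z : Fin n → ℝ) (θ : Fin K → Fin n → ℝ) (hθ : ∀ a, ∑ i, θ a i ^ 2 = 1)
    (astar : Fin K)
    (hgap : ∀ a : Fin K, a ≠ astar → Δ < ∑ i, (θ astar i - θ a i) * z i)
    (zhat : ℕ → Ω → (Fin n → ℝ))
    (hzhat : ∀ t ω, zhat t ω = fun i => z i + (t : ℝ)⁻¹ * ∑ s ∈ Icc 1 t, η s ω i)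
    (a : ℕ → Ω → Fin K) (hameas : ∀ t, Measurable (a t))
    (hgreedy : ∀ t, 1 ≤ t → ∀ ω, ∀ b : Fin K,
      ∑ i, θ b i * zhat t ω i ≤ ∑ i, θ (a t ω) i * zhat t ω i)
    (Δbar : ℝ)
    (hΔbar_ub : ∀ b : Fin K, b ≠ astar → ∑ i, (θ astar i - θ b i) * z i ≤ Δbar)
    (hΔbar_mem : ∃ b : Fin K, b ≠ astar ∧ ∑ i, (θ astar i - θ b i) * z i = Δbar) :
    ∀ T : ℕ,
      (∫ ω, ∑ t ∈ Icc 1 T, ∑ i, (θ astar i - θ (a t ω) i) * z i ∂P) ≤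
        2 * K * Δbar * (exp (Δ ^ 2 / (8 * σ ^ 2)) - 1)⁻¹ :=
  greedy1_constant_regret_general n K σ Δ hσ hΔ Ω P η hindep hgauss z θ hθ astar hgap zhat hzhat a
    hameas hgreedy Δbar hΔbar_ub hΔbar_mem
end
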